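/- Let G be a subgroup of Homeo₊(I) such that for every nonempty open U ⊆ I there is a non-identity g_U ∈ G fixing I \ U pointwise. If τ is a Hausdorff group topology on G, then for every x ∈ I the point-evaluation map f ↦ f(x) from (G, τ) to I is continuous. -/

import Mathlib

open Set

/-- The unit interval `[0,1]` as a subspace of `ℝ`. -/
abbrev I01 : Set ℝ := Set.Icc (0 : ℝ) 1

/-- The group of self-homeomorphisms of `I = [0,1]`, with multiplication
`f * g = f ∘ g`. -/
instance : Group (I01 ≃ₜ I01) where
  mul f g := g.trans f
  one := Homeomorph.refl I01
  inv := Homeomorph.symm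
  mul_assoc f g h := Homeomorph.ext fun x => rfl
  one_mul f := Homeomorph.ext fun x => rfl
  mul_one f := Homeomorph.ext fun x => rfl
  inv_mul_cancel f := Homeomorph.ext fun x => f.symm_apply_apply x

/-! If `h` is close to the identity in a Hausdorff group topology on `G`, it cannot move a nonempty
open set `U` off itself: take noncommuting `g, k ∈ G` supported in `U`; any `h` with
`h U ∩ U = ∅` makes `h g h⁻¹` commute with `k`, a closed condition that fails at `h = 1`.
For monotone `h`, `h x ≤ a < x` would move `(a, x)` off itself and `x < b ≤ h x` would move
`(x, b)` off itself, so `h x ∈ (a, b)` for `h` near the identity. Translation spreads continuity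
at the identity to all of `G`. -/

open Filter Topology

theorem Monotone.disjoint_image_Ioo_of_apply_le {α : Type*} [Preorder α] {f : α → α}
    (hf : Monotone f) {a x : α} (hfx : f x ≤ a) : Disjoint (f '' Ioo a x) (Ioo a x) :=
  disjoint_left.2 fun _ ⟨_, hy, hfy⟩ hz => (hfy ▸ hz.1).not_ge ((hf hy.2.le).trans hfx)

theorem Monotone.disjoint_image_Ioo_of_le_apply {α : Type*} [Preorder α] {f : α → α}
    (hf : Monotone f) {b x : α} (hfx : b ≤ f x) : Disjoint (f '' Ioo x b) (Ioo x b) :=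
  disjoint_left.2 fun _ ⟨_, hy, hfy⟩ hz => (hfy ▸ hz.2).not_ge (hfx.trans (hf hy.1.le))

theorem eventually_conj_notMem_centralizer {H : Type*} [Group H] [TopologicalSpace H]
    [IsTopologicalGroup H] [T2Space H] {g : H} {s : Set H} (hg : g ∉ s.centralizer) :
    ∀ᶠ h in 𝓝 1, h * g * h⁻¹ ∉ s.centralizer :=
  ((Set.isClosed_centralizer s).preimage (by fun_prop)).isOpen_compl.mem_nhds (by simpa using hg)

namespace Homeomorph

variable {X : Type*} [TopologicalSpace X]

def IsSupportedIn (f : X ≃ₜ X) (U : Set X) : Prop := ∀ p ∉ U, f p = p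

namespace IsSupportedIn

variable {f k : X ≃ₜ X} {U V : Set X}

theorem mono (hf : f.IsSupportedIn U) (hUV : U ⊆ V) : f.IsSupportedIn V :=
  fun p hp => hf p fun hpU => hp (hUV hpU)

theorem apply_mem (hf : f.IsSupportedIn U) {p : X} (hp : p ∈ U) : f p ∈ U := by
  by_contra hfp
  exact (f.injective (hf _ hfp) ▸ hfp) hp

theorem commute (hf : f.IsSupportedIn U) (hk : k.IsSupportedIn V) (hUV : Disjoint U V) :
    Commute f k := by
  ext p
  change f (k p) = k (f p)
  by_cases hpU : p ∈ U
  · have hpV : p ∉ V := hUV.notMem_of_mem_left hpU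
    rw [hk p hpV, hk _ (hUV.notMem_of_mem_left (hf.apply_mem hpU))]
  · by_cases hpV : p ∈ V
    · rw [hf p hpU, hf _ (hUV.notMem_of_mem_right (hk.apply_mem hpV))]
    · rw [hk p hpV, hf p hpU, hk p hpV]

theorem conj (hf : f.IsSupportedIn U) (h : X ≃ₜ X) :
    (h * f * h⁻¹).IsSupportedIn (h '' U) := by
  intro p hp
  have hp' : h⁻¹ p ∉ U := fun hmem => hp ⟨h⁻¹ p, hmem, h.apply_symm_apply p⟩
  change h (f (h⁻¹ p)) = p
  rw [hf _ hp', inv_apply, apply_symm_apply]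

end IsSupportedIn

/-- A nontrivial `g` supported in `U` moves some `p ∈ U` off a neighbourhood `V` of `p`; any
nontrivial `k` supported in `V` then fails to commute with `g`. -/
theorem exists_not_commute_of_isSupportedIn [T2Space X] {G : Subgroup (X ≃ₜ X)}
    (hflex : ∀ U : Set X, IsOpen U → U.Nonempty → ∃ g ∈ G, g ≠ 1 ∧ g.IsSupportedIn U)
    {U : Set X} (hU : IsOpen U) (hne : U.Nonempty) :
    ∃ g ∈ G, ∃ k ∈ G, g.IsSupportedIn U ∧ k.IsSupportedIn U ∧ ¬Commute g k := by
  obtain ⟨g, hgG, hg1, hgU⟩ := hflex U hU hne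
  obtain ⟨p, hp⟩ : ∃ p, g p ≠ p := by
    by_contra! hfix
    exact hg1 (Homeomorph.ext hfix)
  obtain ⟨W, W', hW, hW', hgpW, hpW', hWW'⟩ := t2_separation hp
  set V : Set X := U ∩ W' ∩ g ⁻¹' W
  have hVU : V ⊆ U := fun q hq => hq.1.1
  have hgV : Disjoint (g '' V) V :=
    disjoint_left.2 fun _ ⟨q, hq, hgq⟩ hq' => hWW'.notMem_of_mem_left (hgq ▸ hq.2) hq'.1.2
  obtain ⟨k, hkG, hk1, hkV⟩ := hflex V ((hU.inter hW').inter (hW.preimage g.continuous))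
    ⟨p, ⟨of_not_not fun hpU => hp (hgU p hpU), hpW'⟩, hgpW⟩
  refine ⟨g, hgG, k, hkG, hgU, hkV.mono hVU, fun hgk => hk1 (Homeomorph.ext fun q => ?_)⟩
  by_cases hq : q ∈ V
  · have hkgq : k (g q) = g q := hkV _ (hgV.notMem_of_mem_left (mem_image_of_mem g hq))
    exact g.injective ((DFunLike.congr_fun hgk q).trans hkgq)
  · exact hkV q hq

variable {G : Subgroup (X ≃ₜ X)} [TopologicalSpace G] [IsTopologicalGroup G]

theorem eventually_not_disjoint_image [T2Space X] [T2Space G]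
    (hflex : ∀ U : Set X, IsOpen U → U.Nonempty → ∃ g ∈ G, g ≠ 1 ∧ g.IsSupportedIn U)
    {U : Set X} (hU : IsOpen U) (hne : U.Nonempty) :
    ∀ᶠ h : G in 𝓝 1, ¬Disjoint ((h : X ≃ₜ X) '' U) U := by
  obtain ⟨g, hgG, k, hkG, hgU, hkU, hgk⟩ := exists_not_commute_of_isSupportedIn hflex hU hne
  have hgk' : (⟨g, hgG⟩ : G) ∉ Set.centralizer {⟨k, hkG⟩} := fun hc =>
    hgk (congrArg Subtype.val (hc _ rfl)).symm
  filter_upwards [eventually_conj_notMem_centralizer hgk'] with h hh hdisj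
  refine hh (Set.mem_centralizer_iff.2 ?_)
  rintro _ rfl
  exact Subtype.ext (hkU.commute (hgU.conj h) hdisj.symm).eq

theorem continuous_apply_of_continuousAt_one {x : X}
    (hx : ContinuousAt (fun g : G => (g : X ≃ₜ X) x) 1) :
    Continuous fun g : G => (g : X ≃ₜ X) x := by
  refine continuous_iff_continuousAt.2 fun f => ?_
  have hf : Tendsto (fun g : G => f⁻¹ * g) (𝓝 f) (𝓝 1) := by
    simpa using (continuous_const_mul f⁻¹).tendsto f
  simpa [ContinuousAt, Function.comp_def] using
    ((f : X ≃ₜ X).continuous.tendsto _).comp (hx.tendsto.comp hf)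

end Homeomorph

/-- Let `G` be a subgroup of `Homeo₊(I)` such that for every nonempty open
`U ⊆ I` there is a non-identity element of `G` fixing `I \ U` pointwise.  If `τ` is a
Hausdorff group topology on `G`, then for every `x ∈ I` the point-evaluation map
`f ↦ f(x)` is continuous from `(G, τ)` to `I`. -/
theorem pl_not_polish_stmt3
    (G : Subgroup (I01 ≃ₜ I01))
    (hmono : ∀ g ∈ G, StrictMono ⇑(g : I01 ≃ₜ I01))
    (hflex : ∀ U : Set I01, IsOpen U → U.Nonempty →
      ∃ g ∈ G, g ≠ 1 ∧ ∀ x ∉ U, (g : I01 ≃ₜ I01) x = x)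
    (τ : TopologicalSpace G)
    (hT2 : @T2Space G τ)
    (hTG : @IsTopologicalGroup G τ _)
    (x : I01) :
    @Continuous G I01 τ _ (fun f : G => (f : I01 ≃ₜ I01) x) := by
  refine Homeomorph.continuous_apply_of_continuousAt_one
    (tendsto_order.2 ⟨fun a ha => ?_, fun b hb => ?_⟩)
  · filter_upwards [Homeomorph.eventually_not_disjoint_image hflex isOpen_Ioo (nonempty_Ioo.2 ha)]
      with h hh
    exact lt_of_not_ge fun hle => hh ((hmono h h.2).monotone.disjoint_image_Ioo_of_apply_le hle)
  · filter_upwards [Homeomorph.eventually_not_disjoint_image hflex isOpen_Ioo (nonempty_Ioo.2 hb)]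
      with h hh
    exact lt_of_not_ge fun hle => hh ((hmono h h.2).monotone.disjoint_image_Ioo_of_le_apply hle)
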